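/- Let d, n ≥ 1, α ∈ (0,1), and let s : X_NA × ℝ → ℝ be measurable. On a common probability space, let (X̂^1,Y^1), …, (X̂^n,Y^n) be i.i.d. with law Q on ℝ^d × ℝ, and let (X^{n+1}, M^{n+1}, Y^{n+1}), taking values in ℝ^d × {0,1}^d × ℝ, be independent of them. Fix m ∈ {0,1}^d with P(M^{n+1} = m) > 0; let P*_m denote the conditional law of (mask(X^{n+1}, m), Y^{n+1}) given {M^{n+1} = m} and Q*_m the law of (mask(X̂^1, m), Y^1). Let ω̂_m : X_NA × ℝ → [0,∞) be any measurable function with 0 < ∫ ω̂_m dQ*_m < ∞, set ω̃_m := ω̂_m / ∫ ω̂_m dQ*_m, and let P̃_m be the probability measure with density ω̃_m with respect to Q*_m. For i ≤ n set S^i_m := s(mask(X̂^i, m), Y^i) and ω̃^i := ω̃_m(mask(X̂^i, m), Y^i), and for (x̃, y) define the weights W^i(x̃,y) := ω̃^i / (Σ_{j=1}^n ω̃^j + ω̃_m(x̃,y)) for i ≤ n and W^{n+1}(x̃,y) := ω̃_m(x̃,y) / (Σ_{j=1}^n ω̃^j + ω̃_m(x̃,y)) (with the convention that the weighted quantile below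 is +∞ when the denominator is 0). Define Ĉ^Ŵ(x̃) := { y ∈ ℝ : s(x̃, y) ≤ Quantile_{1−α}( Σ_{i=1}^n W^i(x̃,y) δ_{S^i_m} + W^{n+1}(x̃,y) δ_{+∞} ) }. Then P( Y^{n+1} ∈ Ĉ^Ŵ(mask(X^{n+1}, M^{n+1})) | M^{n+1} = m ) ≥ 1 − α − d_TV(P̃_m, P*_m). -/

import Mathlib

/-!
Write `w` for the normalised weight `ω̃_m` and let `Z₀, …, Zₙ` be i.i.d. with law `Q*_m`. The
weighted quantile is invariant under permuting the points together with their weights, so the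
`w(Z_k)`-weighted probability that `Z_k` is not covered is the same for every `k`. For each
realisation the uncovered points carry at most an `α`-fraction of the total weight `∑ w(Z_k)`,
whose expectation is `n + 1`; hence the test point is uncovered with `w`-weighted probability at
most `α`. Reweighting the test coordinate by `w` turns `Q*_m` into `P̃_m`, so coverage is at least
`1 - α` when the test point is drawn from `P̃_m` independently of the calibration sample. Given
`M^{n+1} = m`, the masked test point has law `P*_m` and is still independent of the masked
calibration sample, and swapping `P̃_m` for `P*_m` in the second factor of a product measure
moves the probability of any event by at most `d_TV(P̃_m, P*_m)`.
-/

open MeasureTheory ProbabilityTheory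
open scoped ENNReal

universe u

/-- Measurable space structure on `Option α`, via the identification with `α ⊕ PUnit`. -/
instance optionMeasurableSpace {α : Type u} [MeasurableSpace α] : MeasurableSpace (Option α) :=
  MeasurableSpace.comap (Equiv.optionEquivSumPUnit.{0, u} α) inferInstance

/-- The `β`-quantile of the discrete distribution `∑ i, w i · δ_{v i}` on `ℝ ∪ {+∞}`:
`inf { z ∈ ℝ : ∑_{i : v i ≤ z} w i ≥ β }`, with `inf ∅ = +∞`. -/
noncomputable def wQuantile {ι : Type*} [Fintype ι] (β : ℝ) (w : ι → ℝ) (v : ι → EReal) : EReal :=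
  sInf {z : EReal | ∃ r : ℝ, z = (r : EReal) ∧
    β ≤ ∑ i ∈ Finset.univ.filter (fun i => v i ≤ (r : EReal)), w i}

/-- Total variation distance between two measures. -/
noncomputable def tvDist {Z : Type*} [MeasurableSpace Z] (P Q : Measure Z) : ℝ :=
  ⨆ A : {A : Set Z // MeasurableSet A}, |(P A.1).toReal - (Q A.1).toReal|

/-- The mask operator: coordinate `j` is `NA` (i.e. `none`) if `m j = true`, else `x j`. -/
def maskOp {d : ℕ} (x : Fin d → ℝ) (m : Fin d → Bool) : Fin d → Option ℝ :=
  fun j => if m j then none else some (x j)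

/-- The `β`-quantile of `(∑_{i=1}^n δ_{sc i} + δ_{+∞})/(n+1)`. -/
noncomputable def splitQuantile {n : ℕ} (β : ℝ) (sc : Fin n → ℝ) : EReal :=
  wQuantile β (fun _ : Option (Fin n) => 1 / (n + 1 : ℝ))
    (fun i => i.elim (⊤ : EReal) (fun j => ((sc j : ℝ) : EReal)))

section Quantile

variable {ι : Type*} [Fintype ι]

noncomputable def weightBelow (w : ι → ℝ) (v : ι → EReal) (z : EReal) : ℝ :=
  ∑ i ∈ Finset.univ.filter (fun i => v i ≤ z), w i

lemma weightBelow_mono {w : ι → ℝ} (hw : ∀ i, 0 ≤ w i) (v : ι → EReal) :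
    Monotone (weightBelow w v) := fun _ _ hab =>
  Finset.sum_le_sum_of_subset_of_nonneg
    (Finset.monotone_filter_right _ fun _ _ h => h.trans hab) fun i _ _ => hw i

lemma coe_le_wQuantile_iff {β t : ℝ} {w : ι → ℝ} {v : ι → EReal} :
    (t : EReal) ≤ wQuantile β w v ↔ ∀ r : ℝ, β ≤ weightBelow w v r → t ≤ r := by
  simp only [wQuantile, le_sInf_iff, Set.mem_ofPred_eq, forall_exists_index, and_imp]
  exact ⟨fun H r hr => EReal.coe_le_coe_iff.1 (H r r rfl hr),
    fun H _ r hz hr => hz ▸ EReal.coe_le_coe_iff.2 (H r hr)⟩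

lemma coe_le_wQuantile_iff_rat {β t : ℝ} {w : ι → ℝ} (hw : ∀ i, 0 ≤ w i) {v : ι → EReal} :
    (t : EReal) ≤ wQuantile β w v ↔ ∀ q : ℚ, β ≤ weightBelow w v (q : ℝ) → t ≤ q := by
  rw [coe_le_wQuantile_iff]
  refine ⟨fun H q hq => H q hq, fun H r hr => ?_⟩
  by_contra! hrt
  obtain ⟨q, hrq, hqt⟩ := exists_rat_btwn hrt
  have hmono := weightBelow_mono hw v (EReal.coe_le_coe_iff.2 hrq.le)
  exact hqt.not_ge (H q (hr.trans hmono))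

lemma measurableSet_coe_le_wQuantile {γ : Type*} [MeasurableSpace γ] {β : ℝ}
    {W : γ → ι → ℝ} (hW : ∀ i, Measurable fun x => W x i) (hW0 : ∀ x i, 0 ≤ W x i)
    {v : γ → ι → EReal} (hv : ∀ i, Measurable fun x => v x i) {t : γ → ℝ} (ht : Measurable t) :
    MeasurableSet {x | (t x : EReal) ≤ wQuantile β (W x) (v x)} := by
  have hset : {x | (t x : EReal) ≤ wQuantile β (W x) (v x)} =
      ⋂ q : ℚ, ({x | β ≤ weightBelow (W x) (v x) (q : ℝ)}ᶜ ∪ {x | t x ≤ q}) := by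
    ext x
    simp only [Set.mem_ofPred_eq, Set.mem_iInter, Set.mem_union, Set.mem_compl_iff,
      coe_le_wQuantile_iff_rat (hW0 x), imp_iff_not_or]
  have hweight (q : ℚ) : Measurable fun x => weightBelow (W x) (v x) (q : ℝ) := by
    simp only [weightBelow, Finset.sum_filter]
    exact Finset.measurable_sum _ fun i _ =>
      Measurable.ite (measurableSet_le (hv i) measurable_const) (hW i) measurable_const
  rw [hset]
  exact .iInter fun q => .union (measurableSet_le measurable_const (hweight q)).compl
    (measurableSet_le ht measurable_const)

lemma wQuantile_comp_equiv {ι' : Type*} [Fintype ι'] (e : ι' ≃ ι) (β : ℝ)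
    (w : ι → ℝ) (v : ι → EReal) :
    wQuantile β (w ∘ e) (v ∘ e) = wQuantile β w v := by
  have hF (z : EReal) : ∑ i ∈ Finset.univ.filter (fun i => v (e i) ≤ z), w (e i)
      = ∑ i ∈ Finset.univ.filter (fun i => v i ≤ z), w i :=
    Finset.sum_equiv e (by simp) (by simp)
  simp only [wQuantile, Function.comp_apply, hF]

lemma coe_le_wQuantile_congr {β t : ℝ} {w : ι → ℝ} {v₁ v₂ : ι → EReal}
    (h : ∀ i, ∀ r : ℝ, r < t → (v₁ i ≤ r ↔ v₂ i ≤ r)) :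
    (t : EReal) ≤ wQuantile β w v₁ ↔ (t : EReal) ≤ wQuantile β w v₂ := by
  simp only [coe_le_wQuantile_iff]
  refine forall_congr' fun r => ?_
  rcases le_or_gt t r with htr | hrt
  · simp [htr]
  · have hF : weightBelow w v₁ r = weightBelow w v₂ r :=
      Finset.sum_congr (Finset.filter_congr fun i _ => h i r hrt) fun _ _ => rfl
    rw [hF]

lemma le_weightBelow_wQuantile {β : ℝ} (hβ : 0 < β) {w : ι → ℝ} (hw : ∀ i, 0 ≤ w i)
    (hβw : β ≤ ∑ i, w i) (v : ι → ℝ) :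
    β ≤ weightBelow w (fun i => (v i : EReal)) (wQuantile β w fun i => (v i : EReal)) := by
  set F := weightBelow w fun i => (v i : EReal)
  have hne : (Finset.univ : Finset ι).Nonempty :=
    Finset.nonempty_of_sum_ne_zero (hβ.trans_le hβw).ne'
  have hT : (Finset.univ.filter fun i => β ≤ F (v i)).Nonempty := by
    obtain ⟨i, -, hi⟩ := Finset.exists_max_image _ v hne
    refine ⟨i, Finset.mem_filter.2 ⟨Finset.mem_univ i, hβw.trans_eq ?_⟩⟩
    exact (Finset.sum_congr (Finset.filter_true_of_mem fun j _ =>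
      EReal.coe_le_coe_iff.2 (hi j (Finset.mem_univ j))) fun _ _ => rfl).symm
  -- The least atom `v i₀` with weight `β` at or below it bounds the quantile from below: an
  -- admissible `r` can be lowered to the largest atom `v j ≤ r` without losing weight.
  obtain ⟨i₀, hi₀, hmin⟩ := Finset.exists_min_image _ v hT
  have hle : (v i₀ : EReal) ≤ wQuantile β w fun i => (v i : EReal) := by
    rw [coe_le_wQuantile_iff]
    intro r hr
    have hJ : (Finset.univ.filter fun j => (v j : EReal) ≤ r).Nonempty := by
      by_contra hJ
      rw [Finset.not_nonempty_iff_eq_empty] at hJ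
      simp only [weightBelow, hJ, Finset.sum_empty] at hr
      linarith
    obtain ⟨j, hj, hjmax⟩ := Finset.exists_max_image _ v hJ
    have hjr : v j ≤ r := EReal.coe_le_coe_iff.1 (Finset.mem_filter.1 hj).2
    have hFj : F (v j) = F r := by
      refine Finset.sum_congr (Finset.filter_congr fun i _ => ?_) fun _ _ => rfl
      simp only [EReal.coe_le_coe_iff]
      exact ⟨fun h => h.trans hjr, fun h => hjmax i (by simpa using h)⟩
    exact (hmin j (Finset.mem_filter.2 ⟨Finset.mem_univ j, hr.trans_eq hFj.symm⟩)).trans hjr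
  exact (Finset.mem_filter.1 hi₀).2.trans (weightBelow_mono hw _ hle)

lemma sum_filter_not_coe_le_wQuantile_le {β : ℝ} (hβ0 : 0 < β) (hβ1 : β ≤ 1) {w : ι → ℝ}
    (hw : ∀ i, 0 ≤ w i) (v : ι → ℝ) :
    ∑ i ∈ Finset.univ.filter (fun i => ¬ (v i : EReal) ≤
        wQuantile β (fun i => w i / ∑ j, w j) (fun i => (v i : EReal))), w i
      ≤ (1 - β) * ∑ j, w j := by
  set D := ∑ j, w j with hDdef
  set q := wQuantile β (fun i => w i / D) (fun i => (v i : EReal))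
  rcases (Finset.sum_nonneg fun i _ => hw i : 0 ≤ D).eq_or_lt with hD | hD
  · have hzero : ∀ i ∈ Finset.univ, w i = 0 :=
      (Finset.sum_eq_zero_iff_of_nonneg fun i _ => hw i).1 hD.symm
    rw [Finset.sum_eq_zero fun i hi => hzero i (Finset.mem_filter.1 hi).1, hDdef, ← hD, mul_zero]
  · have hmass := le_weightBelow_wQuantile hβ0 (fun i => div_nonneg (hw i) hD.le)
      (by rw [← Finset.sum_div, div_self hD.ne']; exact hβ1) v
    have hgood : β * D ≤ weightBelow w (fun i => (v i : EReal)) q := by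
      rwa [weightBelow, ← Finset.sum_div, le_div_iff₀ hD] at hmass
    have hsplit := Finset.sum_filter_add_sum_filter_not Finset.univ
      (fun i => (v i : EReal) ≤ q) w
    simp only [weightBelow] at hgood
    linarith

end Quantile

section Exchangeability

variable {Z : Type*} {ι : Type*} [Fintype ι]

def conformalCoveredSet (β : ℝ) (s w : Z → ℝ) (k : ι) : Set (ι → Z) :=
  {f | (s (f k) : EReal) ≤
    wQuantile β (fun i => w (f i) / ∑ j, w (f j)) (fun i => (s (f i) : EReal))}

variable {β : ℝ} {s w : Z → ℝ}

lemma comp_perm_mem_conformalCoveredSet_iff (σ : Equiv.Perm ι) (f : ι → Z) (k : ι) :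
    f ∘ σ ∈ conformalCoveredSet β s w k ↔ f ∈ conformalCoveredSet β s w (σ k) := by
  have hsum : ∑ j, w ((f ∘ σ) j) = ∑ j, w (f j) := Equiv.sum_comp σ (fun j => w (f j))
  simp only [conformalCoveredSet, Set.mem_ofPred_eq, hsum]
  exact Iff.of_eq (congrArg _ (wQuantile_comp_equiv σ β (fun i => w (f i) / ∑ j, w (f j))
    (fun i => (s (f i) : EReal))))

open Classical in
lemma sum_filter_not_mem_conformalCoveredSet_le (hβ0 : 0 < β) (hβ1 : β ≤ 1)
    (hw0 : ∀ z, 0 ≤ w z) (f : ι → Z) :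
    ∑ k ∈ Finset.univ.filter (fun k => f ∉ conformalCoveredSet β s w k), w (f k)
      ≤ (1 - β) * ∑ j, w (f j) := by
  convert sum_filter_not_coe_le_wQuantile_le hβ0 hβ1 (fun i => hw0 (f i)) (fun i => s (f i))
  exact Iff.rfl

variable [MeasurableSpace Z]

lemma measurableSet_conformalCoveredSet (hs : Measurable s) (hw : Measurable w)
    (hw0 : ∀ z, 0 ≤ w z) (k : ι) : MeasurableSet (conformalCoveredSet β s w k : Set (ι → Z)) :=
  measurableSet_coe_le_wQuantile
    (fun i => (hw.comp (measurable_pi_apply i)).div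
      (Finset.measurable_sum _ fun j _ => hw.comp (measurable_pi_apply j)))
    (fun _ _ => div_nonneg (hw0 _) (Finset.sum_nonneg fun _ _ => hw0 _))
    (fun i => measurable_coe_real_ereal.comp (hs.comp (measurable_pi_apply i)))
    (hs.comp (measurable_pi_apply k))

lemma measurePreserving_comp_perm (Qs : Measure Z) [SigmaFinite Qs] (σ : Equiv.Perm ι) :
    MeasurePreserving (fun f : ι → Z => f ∘ σ) (Measure.pi fun _ => Qs)
      (Measure.pi fun _ => Qs) := by
  convert measurePreserving_arrowCongr' (fun _ => Qs) (fun _ => Qs) σ.symm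
    (MeasurableEquiv.refl Z) fun _ => MeasurePreserving.id Qs
  rfl

variable (Qs : Measure Z)

lemma sum_setLIntegral_compl_conformalCoveredSet_le [IsProbabilityMeasure Qs]
    (hs : Measurable s) (hw : Measurable w) (hw0 : ∀ z, 0 ≤ w z)
    (hint : ∫⁻ z, ENNReal.ofReal (w z) ∂Qs = 1) (hβ0 : 0 < β) (hβ1 : β ≤ 1) :
    ∑ k : ι, ∫⁻ f in (conformalCoveredSet β s w k)ᶜ, ENNReal.ofReal (w (f k))
        ∂(Measure.pi fun _ => Qs)
      ≤ ENNReal.ofReal (1 - β) * Fintype.card ι := by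
  classical
  set ρ := Measure.pi fun _ : ι => Qs
  have hmeas (k : ι) : Measurable fun f : ι → Z => ENNReal.ofReal (w (f k)) :=
    (hw.comp (measurable_pi_apply k)).ennreal_ofReal
  have hweight (k : ι) : ∫⁻ f, ENNReal.ofReal (w (f k)) ∂ρ = 1 := by
    rw [(measurePreserving_eval (fun _ => Qs) k).lintegral_comp hw.ennreal_ofReal, hint]
  have hpointwise (f : ι → Z) :
      ∑ k, (conformalCoveredSet β s w k)ᶜ.indicator (fun f => ENNReal.ofReal (w (f k))) f
        ≤ ENNReal.ofReal (1 - β) * ∑ k, ENNReal.ofReal (w (f k)) := by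
    simp only [Set.indicator_apply, Set.mem_compl_iff, ← Finset.sum_filter]
    rw [← ENNReal.ofReal_sum_of_nonneg fun k _ => hw0 _,
      ← ENNReal.ofReal_sum_of_nonneg fun k _ => hw0 _,
      ← ENNReal.ofReal_mul (by linarith)]
    exact ENNReal.ofReal_le_ofReal (sum_filter_not_mem_conformalCoveredSet_le hβ0 hβ1 hw0 f)
  calc ∑ k, ∫⁻ f in (conformalCoveredSet β s w k)ᶜ, ENNReal.ofReal (w (f k)) ∂ρ
      = ∫⁻ f, ∑ k, (conformalCoveredSet β s w k)ᶜ.indicator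
          (fun f => ENNReal.ofReal (w (f k))) f ∂ρ := by
        rw [lintegral_finsetSum _ fun k _ => (hmeas k).indicator
          (measurableSet_conformalCoveredSet hs hw hw0 k).compl]
        exact Finset.sum_congr rfl fun k _ =>
          (lintegral_indicator (measurableSet_conformalCoveredSet hs hw hw0 k).compl _).symm
    _ ≤ ∫⁻ f, ENNReal.ofReal (1 - β) * ∑ k, ENNReal.ofReal (w (f k)) ∂ρ :=
        lintegral_mono hpointwise
    _ = ENNReal.ofReal (1 - β) * Fintype.card ι := by
        rw [lintegral_const_mul _ (Finset.measurable_sum _ fun k _ => hmeas k),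
          lintegral_finsetSum _ fun k _ => hmeas k]
        simp [hweight]

variable [DecidableEq ι]

lemma setLIntegral_compl_conformalCoveredSet_eq [SigmaFinite Qs] (hs : Measurable s)
    (hw : Measurable w) (hw0 : ∀ z, 0 ≤ w z) (k i₀ : ι) :
    ∫⁻ f in (conformalCoveredSet β s w k)ᶜ, ENNReal.ofReal (w (f k)) ∂(Measure.pi fun _ => Qs)
      = ∫⁻ f in (conformalCoveredSet β s w i₀)ᶜ, ENNReal.ofReal (w (f i₀))
          ∂(Measure.pi fun _ => Qs) := by
  set σ := Equiv.swap k i₀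
  have hσ : σ i₀ = k := Equiv.swap_apply_right k i₀
  have hpre : (fun f : ι → Z => f ∘ σ) ⁻¹' (conformalCoveredSet β s w i₀)ᶜ
      = (conformalCoveredSet β s w k)ᶜ := by
    ext f
    simp only [Set.mem_preimage, Set.mem_compl_iff, comp_perm_mem_conformalCoveredSet_iff, hσ]
  rw [← (measurePreserving_comp_perm Qs σ).setLIntegral_comp_preimage
    (f := fun f => ENNReal.ofReal (w (f i₀)))
    (measurableSet_conformalCoveredSet hs hw hw0 i₀).compl
    (hw.comp (measurable_pi_apply i₀)).ennreal_ofReal, hpre]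
  simp only [Function.comp_apply, hσ]

theorem ofReal_le_setLIntegral_conformalCoveredSet [IsProbabilityMeasure Qs]
    (hs : Measurable s) (hw : Measurable w) (hw0 : ∀ z, 0 ≤ w z)
    (hint : ∫⁻ z, ENNReal.ofReal (w z) ∂Qs = 1) (hβ0 : 0 < β) (hβ1 : β ≤ 1) (i₀ : ι) :
    ENNReal.ofReal β ≤ ∫⁻ f in conformalCoveredSet β s w i₀, ENNReal.ofReal (w (f i₀))
      ∂(Measure.pi fun _ => Qs) := by
  set ρ := Measure.pi fun _ : ι => Qs
  set covered := ∫⁻ f in conformalCoveredSet β s w i₀, ENNReal.ofReal (w (f i₀)) ∂ρ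
  set missed := ∫⁻ f in (conformalCoveredSet β s w i₀)ᶜ, ENNReal.ofReal (w (f i₀)) ∂ρ
  have : Nonempty ι := ⟨i₀⟩
  have hcard : (Fintype.card ι : ℝ≥0∞) ≠ 0 := by simp
  have hmissed : missed ≤ ENNReal.ofReal (1 - β) := by
    have h := sum_setLIntegral_compl_conformalCoveredSet_le (ι := ι) Qs hs hw hw0 hint hβ0 hβ1
    simp only [setLIntegral_compl_conformalCoveredSet_eq Qs hs hw hw0 _ i₀, Finset.sum_const,
      Finset.card_univ, nsmul_eq_mul, mul_comm (ENNReal.ofReal _)] at h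
    exact (ENNReal.mul_le_mul_iff_right hcard (ENNReal.natCast_ne_top _)).1 h
  have htotal : covered + missed = 1 := by
    rw [lintegral_add_compl _ (measurableSet_conformalCoveredSet hs hw hw0 i₀),
      (measurePreserving_eval (fun _ => Qs) i₀).lintegral_comp hw.ennreal_ofReal, hint]
  calc ENNReal.ofReal β = 1 - ENNReal.ofReal (1 - β) := by
        rw [ENNReal.ofReal_sub _ hβ0.le, ENNReal.ofReal_one,
          ENNReal.sub_sub_cancel ENNReal.one_ne_top (ENNReal.ofReal_le_one.2 hβ1)]
    _ ≤ 1 - missed := tsub_le_tsub_left hmissed 1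
    _ = covered := (ENNReal.eq_sub_of_add_eq (ne_top_of_le_ne_top ENNReal.ofReal_ne_top hmissed)
        htotal).symm

end Exchangeability

section TotalVariation

variable {α β : Type*} [MeasurableSpace α] [MeasurableSpace β]

lemma abs_sub_le_tvDist {P P' : Measure β} [IsFiniteMeasure P] [IsFiniteMeasure P'] {A : Set β}
    (hA : MeasurableSet A) : |(P A).toReal - (P' A).toReal| ≤ tvDist P P' := by
  refine le_ciSup (f := fun A : {A : Set β // MeasurableSet A} =>
    |(P A.1).toReal - (P' A.1).toReal|) ⟨(P .univ).toReal + (P' .univ).toReal, ?_⟩ ⟨A, hA⟩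
  rintro _ ⟨B, rfl⟩
  refine (abs_sub _ _).trans ?_
  simp only [abs_of_nonneg ENNReal.toReal_nonneg]
  gcongr <;> first | exact measure_ne_top _ _ | exact Set.subset_univ _

lemma toReal_prod_apply_le_add_tvDist (ν : Measure α) [IsProbabilityMeasure ν]
    {P P' : Measure β} [IsFiniteMeasure P] [IsFiniteMeasure P'] {A : Set (α × β)}
    (hA : MeasurableSet A) :
    ((ν.prod P) A).toReal ≤ ((ν.prod P') A).toReal + tvDist P P' := by
  have hsection (Q : Measure β) [IsFiniteMeasure Q] :
      ((ν.prod Q) A).toReal = ∫ u, (Q (Prod.mk u ⁻¹' A)).toReal ∂ν ∧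
        Integrable (fun u => (Q (Prod.mk u ⁻¹' A)).toReal) ν := by
    have hmeas := measurable_measure_prodMk_left (ν := Q) hA
    refine ⟨?_, Integrable.of_bound hmeas.ennreal_toReal.aestronglyMeasurable (Q .univ).toReal
      (ae_of_all _ fun u => ?_)⟩
    · rw [Measure.prod_apply hA, integral_toReal hmeas.aemeasurable
        (ae_of_all _ fun _ => measure_lt_top _ _)]
    · rw [Real.norm_of_nonneg ENNReal.toReal_nonneg]
      exact ENNReal.toReal_mono (measure_ne_top _ _) (measure_mono (Set.subset_univ _))
  obtain ⟨hP, hPint⟩ := hsection P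
  obtain ⟨hP', hP'int⟩ := hsection P'
  rw [hP, hP']
  calc ∫ u, (P (Prod.mk u ⁻¹' A)).toReal ∂ν
      ≤ ∫ u, ((P' (Prod.mk u ⁻¹' A)).toReal + tvDist P P') ∂ν :=
        integral_mono hPint (hP'int.add (integrable_const _)) fun u =>
          sub_le_iff_le_add'.1 ((le_abs_self _).trans (abs_sub_le_tvDist
            (measurable_prodMk_left hA)))
    _ = ∫ u, (P' (Prod.mk u ⁻¹' A)).toReal ∂ν + tvDist P P' := by
        rw [integral_add hP'int (integrable_const _), integral_const]
        simp

end TotalVariation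

section SplitConformal

variable {Z : Type*} {ι : Type*} [Fintype ι]

-- Index `none` is the test point `p.2`, which enters the quantile with score `+∞`.
def coveredByConformalSet (β : ℝ) (s w : Z → ℝ) : Set ((ι → Z) × Z) :=
  {p | (s p.2 : EReal) ≤ wQuantile β
    (fun i : Option ι => i.elim (w p.2 / (∑ j, w (p.1 j) + w p.2))
      (fun j => w (p.1 j) / (∑ j', w (p.1 j') + w p.2)))
    (fun i : Option ι => i.elim (⊤ : EReal) (fun j => (s (p.1 j) : EReal)))}

variable [MeasurableSpace Z] {β : ℝ} {s w : Z → ℝ}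

lemma preimage_piOptionEquivProd_coveredByConformalSet :
    MeasurableEquiv.piOptionEquivProd (fun _ => Z) ⁻¹' coveredByConformalSet β s w
      = conformalCoveredSet β s w (none : Option ι) := by
  ext f
  have hweights : (fun i : Option ι => i.elim (w (f none) / (∑ j, w (f (some j)) + w (f none)))
      (fun j => w (f (some j)) / (∑ j', w (f (some j')) + w (f none))))
      = fun i => w (f i) / ∑ j, w (f j) := by
    funext i
    cases i <;> simp [Fintype.sum_option, add_comm]
  rw [conformalCoveredSet, Set.mem_ofPred_eq, ← hweights]
  -- the scores `+∞` and `s (f none)` lie on the same side of every level `r < s (f none)`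
  refine coe_le_wQuantile_congr fun i r hr => ?_
  cases i with
  | none => exact iff_of_false (by simp) (EReal.coe_le_coe_iff.not.2 (not_le.2 hr))
  | some j => rfl

lemma measurableSet_coveredByConformalSet (hs : Measurable s) (hw : Measurable w)
    (hw0 : ∀ z, 0 ≤ w z) : MeasurableSet (coveredByConformalSet β s w : Set ((ι → Z) × Z)) := by
  rw [← MeasurableEquiv.measurableSet_preimage (MeasurableEquiv.piOptionEquivProd fun _ => Z),
    preimage_piOptionEquivProd_coveredByConformalSet]
  exact measurableSet_conformalCoveredSet hs hw hw0 none

lemma measurePreserving_piOptionEquivProd (Qs : Measure Z) [SigmaFinite Qs] :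
    MeasurePreserving (MeasurableEquiv.piOptionEquivProd fun _ : Option ι => Z)
      (Measure.pi fun _ => Qs) ((Measure.pi fun _ => Qs).prod Qs) :=
  MeasurePreserving.symm _
    ⟨(MeasurableEquiv.piOptionEquivProd _).symm.measurable, Measure.pi_map_piOptionEquivProd _⟩

theorem ofReal_le_prod_withDensity_coveredByConformalSet (Qs : Measure Z)
    [IsProbabilityMeasure Qs] (hs : Measurable s) (hw : Measurable w) (hw0 : ∀ z, 0 ≤ w z)
    (hint : ∫⁻ z, ENNReal.ofReal (w z) ∂Qs = 1) (hβ0 : 0 < β) (hβ1 : β ≤ 1) :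
    ENNReal.ofReal β ≤ ((Measure.pi fun _ : ι => Qs).prod
      (Qs.withDensity fun z => ENNReal.ofReal (w z))) (coveredByConformalSet β s w) := by
  classical
  have hg : Measurable fun z => ENNReal.ofReal (w z) := hw.ennreal_ofReal
  rw [prod_withDensity_right hg,
    withDensity_apply _ (measurableSet_coveredByConformalSet hs hw hw0),
    ← (measurePreserving_piOptionEquivProd Qs).setLIntegral_comp_preimage
      (f := fun p => ENNReal.ofReal (w p.2))
      (measurableSet_coveredByConformalSet hs hw hw0) (hg.comp measurable_snd),
    preimage_piOptionEquivProd_coveredByConformalSet]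
  exact ofReal_le_setLIntegral_conformalCoveredSet Qs hs hw hw0 hint hβ0 hβ1 none

theorem sub_tvDist_le_prod_coveredByConformalSet (Qs : Measure Z) [IsProbabilityMeasure Qs]
    (P : Measure Z) [IsFiniteMeasure P] (hs : Measurable s) (hw : Measurable w)
    (hw0 : ∀ z, 0 ≤ w z) (hint : ∫⁻ z, ENNReal.ofReal (w z) ∂Qs = 1) (hβ0 : 0 < β)
    (hβ1 : β ≤ 1) :
    β - tvDist (Qs.withDensity fun z => ENNReal.ofReal (w z)) P
      ≤ (((Measure.pi fun _ : ι => Qs).prod P) (coveredByConformalSet β s w)).toReal := by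
  have : IsFiniteMeasure (Qs.withDensity fun z => ENNReal.ofReal (w z)) :=
    isFiniteMeasure_withDensity (hint ▸ ENNReal.one_ne_top)
  have hcover := ENNReal.toReal_mono (measure_ne_top _ _)
    (ofReal_le_prod_withDensity_coveredByConformalSet (ι := ι) Qs hs hw hw0 hint hβ0 hβ1)
  rw [ENNReal.toReal_ofReal hβ0.le] at hcover
  linarith [toReal_prod_apply_le_add_tvDist (Measure.pi fun _ : ι => Qs)
    (measurableSet_coveredByConformalSet (β := β) hs hw hw0)
    (P := Qs.withDensity fun z => ENNReal.ofReal (w z)) (P' := P)]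

end SplitConformal

section ConditionalLaw

variable {Ω α β : Type*} [MeasurableSpace Ω] [MeasurableSpace α] [MeasurableSpace β]
  {μ : Measure Ω}

lemma map_cond_prodMk_of_indepFun [IsFiniteMeasure μ] {U : Ω → α} {V : Ω → β}
    (hU : Measurable U) (hV : Measurable V) (hUV : IndepFun U V μ) {C : Set β}
    (hC : MeasurableSet C) :
    (μ[|V ⁻¹' C]).map (fun ω => (U ω, V ω)) = (μ.map U).prod ((μ[|V ⁻¹' C]).map V) := by
  refine (Measure.prod_eq fun A B hA hB => ?_).symm
  have hinter : V ⁻¹' C ∩ (fun ω => (U ω, V ω)) ⁻¹' A ×ˢ B = U ⁻¹' A ∩ V ⁻¹' (C ∩ B) := by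
    ext ω
    simp only [Set.mem_inter_iff, Set.mem_preimage, Set.mem_prod]
    tauto
  rw [Measure.map_apply (hU.prodMk hV) (hA.prod hB), Measure.map_apply hU hA,
    Measure.map_apply hV hB, cond_apply (hV hC), cond_apply (hV hC), hinter,
    hUV.measure_inter_preimage_eq_mul _ _ hA (hC.inter hB), ← Set.preimage_inter]
  ring

lemma map_cond_pi_prod_of_iIndepFun {ι α' β' : Type*} [Fintype ι] [MeasurableSpace α']
    [MeasurableSpace β'] [IsProbabilityMeasure μ] {X : ι → Ω → α} (hX : ∀ i, Measurable (X i))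
    (hiid : iIndepFun X μ) {Q : Measure α} [IsFiniteMeasure Q] (hlaw : ∀ i, μ.map (X i) = Q)
    {V : Ω → β} (hV : Measurable V) (hXV : IndepFun (fun ω i => X i ω) V μ) {C : Set β}
    (hC : MeasurableSet C) {φ : α → α'} (hφ : Measurable φ) {ψ : β → β'} (hψ : Measurable ψ) :
    (μ[|V ⁻¹' C]).map (fun ω => (fun i => φ (X i ω), ψ (V ω)))
      = (Measure.pi fun _ : ι => Q.map φ).prod ((μ[|V ⁻¹' C]).map (ψ ∘ V)) := by
  have hsample : μ.map (fun ω i => X i ω) = Measure.pi fun _ => Q := by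
    rw [(iIndepFun_iff_map_fun_eq_pi_map fun i => (hX i).aemeasurable).1 hiid]
    simp only [hlaw]
  have hφpi : Measurable fun (v : ι → α) i => φ (v i) :=
    measurable_pi_lambda _ fun i => hφ.comp (measurable_pi_apply i)
  calc (μ[|V ⁻¹' C]).map (fun ω => (fun i => φ (X i ω), ψ (V ω)))
      = ((μ[|V ⁻¹' C]).map fun ω => (fun i => X i ω, V ω)).map
          (Prod.map (fun v i => φ (v i)) ψ) :=
        (Measure.map_map (hφpi.prodMap hψ) ((measurable_pi_lambda _ hX).prodMk hV)).symm
    _ = ((μ.map fun ω i => X i ω).map fun v i => φ (v i)).prod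
          (((μ[|V ⁻¹' C]).map V).map ψ) := by
        rw [map_cond_prodMk_of_indepFun (measurable_pi_lambda _ hX) hV hXV hC,
          Measure.map_prod_map _ _ hφpi hψ]
    _ = (Measure.pi fun _ : ι => Q.map φ).prod ((μ[|V ⁻¹' C]).map (ψ ∘ V)) := by
        rw [hsample, Measure.pi_map_pi fun _ => hφ.aemeasurable, Measure.map_map hψ hV]

end ConditionalLaw

lemma measurable_some {α : Type*} [MeasurableSpace α] : Measurable (some : α → Option α) := by
  rintro _ ⟨u, hu, rfl⟩
  exact measurable_inl hu

lemma measurable_maskOp {d : ℕ} (m : Fin d → Bool) :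
    Measurable fun x : Fin d → ℝ => maskOp x m := by
  refine measurable_pi_lambda _ fun j => ?_
  by_cases hj : m j <;> simp only [maskOp, hj]
  · exact measurable_const
  · exact measurable_some.comp (measurable_pi_apply j)

lemma lintegral_ofReal_div_integral_eq_one {Z : Type*} [MeasurableSpace Z] {μ : Measure Z}
    {f : Z → ℝ} (hf0 : ∀ z, 0 ≤ f z) (hpos : 0 < ∫ z, f z ∂μ) :
    ∫⁻ z, ENNReal.ofReal (f z / ∫ z, f z ∂μ) ∂μ = 1 := by
  rw [← ofReal_integral_eq_lintegral_ofReal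
    ((Integrable.of_integral_ne_zero hpos.ne').div_const _)
    (ae_of_all _ fun z => div_nonneg (hf0 z) hpos.le), integral_div, div_self hpos.ne',
    ENNReal.ofReal_one]

theorem weighted_conformal_estimated_ratio_coverage_general
    (d n : ℕ) (α : ℝ) (hα : α ∈ Set.Ioo (0 : ℝ) 1)
    (s : (Fin d → Option ℝ) × ℝ → ℝ) (hs : Measurable s)
    (Q : Measure ((Fin d → ℝ) × ℝ)) [IsProbabilityMeasure Q]
    {Ω : Type*} [MeasurableSpace Ω] (μ : Measure Ω) [IsProbabilityMeasure μ]
    (XY : Fin n → Ω → (Fin d → ℝ) × ℝ) (hXYmeas : ∀ i, Measurable (XY i))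
    (hXYiid : iIndepFun XY μ)
    (hXYlaw : ∀ i, Measure.map (XY i) μ = Q)
    (Xt : Ω → Fin d → ℝ) (Mt : Ω → Fin d → Bool) (Yt : Ω → ℝ)
    (hXt : Measurable Xt) (hMt : Measurable Mt) (hYt : Measurable Yt)
    (hindep : IndepFun (fun x => fun i => XY i x) (fun x => (Xt x, Mt x, Yt x)) μ)
    (m : Fin d → Bool) (hm : μ {x | Mt x = m} ≠ 0)
    (Qstar : Measure ((Fin d → Option ℝ) × ℝ))
    (hQstar : Qstar = Measure.map (fun p => (maskOp p.1 m, p.2)) Q)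
    (Pstar : Measure ((Fin d → Option ℝ) × ℝ))
    (hPstar : Pstar = Measure.map (fun x => (maskOp (Xt x) m, Yt x)) (μ[|{x | Mt x = m}]))
    (wm : (Fin d → Option ℝ) × ℝ → ℝ) (hwmeas : Measurable wm) (hw0 : ∀ z, 0 ≤ wm z)
    (c : ℝ) (hc : c = ∫ z, wm z ∂Qstar) (hcpos : 0 < c) :
    1 - α - tvDist (Qstar.withDensity (fun z => ENNReal.ofReal (wm z / c))) Pstar ≤
      ((μ[|{x | Mt x = m}]) {x | ((s (maskOp (Xt x) (Mt x), Yt x) : ℝ) : EReal) ≤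
        wQuantile (1 - α)
          (fun i : Option (Fin n) =>
            i.elim
              ((wm (maskOp (Xt x) (Mt x), Yt x) / c) /
                ((∑ j : Fin n, wm (maskOp (XY j x).1 m, (XY j x).2) / c) +
                  wm (maskOp (Xt x) (Mt x), Yt x) / c))
              (fun j => (wm (maskOp (XY j x).1 m, (XY j x).2) / c) /
                ((∑ j' : Fin n, wm (maskOp (XY j' x).1 m, (XY j' x).2) / c) +
                  wm (maskOp (Xt x) (Mt x), Yt x) / c)))
          (fun i : Option (Fin n) =>
            i.elim (⊤ : EReal)
              (fun j => ((s (maskOp (XY j x).1 m, (XY j x).2) : ℝ) : EReal)))}).toReal := by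
  have hB : MeasurableSet {x | Mt x = m} := hMt (measurableSet_singleton m)
  have : IsProbabilityMeasure (μ[|{x | Mt x = m}]) := cond_isProbabilityMeasure hm
  have hmask : Measurable fun p : (Fin d → ℝ) × ℝ => (maskOp p.1 m, p.2) :=
    ((measurable_maskOp m).comp measurable_fst).prodMk measurable_snd
  have : IsProbabilityMeasure Qstar := hQstar ▸ Measure.isProbabilityMeasure_map hmask.aemeasurable
  have : IsFiniteMeasure Pstar := hPstar ▸ inferInstance
  set Φ : Ω → (Fin n → (Fin d → Option ℝ) × ℝ) × (Fin d → Option ℝ) × ℝ :=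
    fun x => (fun i => (maskOp (XY i x).1 m, (XY i x).2), (maskOp (Xt x) m, Yt x))
  have hΦ : Measurable Φ := (measurable_pi_lambda _ fun i => hmask.comp (hXYmeas i)).prodMk
    (((measurable_maskOp m).comp hXt).prodMk hYt)
  have hlaw : (μ[|{x | Mt x = m}]).map Φ = (Measure.pi fun _ => Qstar).prod Pstar := by
    rw [hQstar, hPstar]
    exact map_cond_pi_prod_of_iIndepFun (C := {p | p.2.1 = m}) hXYmeas hXYiid hXYlaw
      (hXt.prodMk (hMt.prodMk hYt)) hindep (measurable_snd.fst (measurableSet_singleton m)) hmask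
      (((measurable_maskOp m).comp measurable_fst).prodMk measurable_snd.snd)
  have hw0' (z : (Fin d → Option ℝ) × ℝ) : 0 ≤ wm z / c := div_nonneg (hw0 z) hcpos.le
  have hcover := sub_tvDist_le_prod_coveredByConformalSet (ι := Fin n) Qstar Pstar hs
    (hwmeas.div_const c) hw0' (hc ▸ lintegral_ofReal_div_integral_eq_one hw0 (hc ▸ hcpos))
    (sub_pos.2 hα.2) (by linarith [hα.1])
  rw [← hlaw, Measure.map_apply hΦ (measurableSet_coveredByConformalSet hs (hwmeas.div_const c)
    hw0')] at hcover
  refine hcover.trans_eq (congrArg ENNReal.toReal (measure_congr (Filter.eventuallyEq_set.2 ?_)))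
  filter_upwards [ae_cond_mem hB] with x (hx : Mt x = m)
  simp only [Set.mem_preimage, hx]
  rfl

/-- Weighted split conformal prediction with an estimated likelihood ratio:
with `Q*_m` the law of `(mask(X̂^1,m), Y^1)`, `P*_m` the conditional law of
`(mask(X^{n+1},m), Y^{n+1})` given `{M^{n+1}=m}`, `ω̂_m` any measurable nonnegative function
with `0 < ∫ ω̂_m dQ*_m < ∞`, `ω̃_m := ω̂_m / ∫ ω̂_m dQ*_m`, `P̃_m := ω̃_m · Q*_m`, the weighted
conformal set built from `ω̃_m` covers with conditional probability
`≥ 1 - α - d_TV(P̃_m, P*_m)` given `{M^{n+1}=m}`. -/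
theorem weighted_conformal_estimated_ratio_coverage
    (d n : ℕ) (hd : 1 ≤ d) (hn : 1 ≤ n) (α : ℝ) (hα : α ∈ Set.Ioo (0 : ℝ) 1)
    (s : (Fin d → Option ℝ) × ℝ → ℝ) (hs : Measurable s)
    (Q : Measure ((Fin d → ℝ) × ℝ)) [IsProbabilityMeasure Q]
    {Ω : Type*} [MeasurableSpace Ω] (μ : Measure Ω) [IsProbabilityMeasure μ]
    (XY : Fin n → Ω → (Fin d → ℝ) × ℝ) (hXYmeas : ∀ i, Measurable (XY i))
    (hXYiid : iIndepFun XY μ)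
    (hXYlaw : ∀ i, Measure.map (XY i) μ = Q)
    (Xt : Ω → Fin d → ℝ) (Mt : Ω → Fin d → Bool) (Yt : Ω → ℝ)
    (hXt : Measurable Xt) (hMt : Measurable Mt) (hYt : Measurable Yt)
    (hindep : IndepFun (fun x => fun i => XY i x) (fun x => (Xt x, Mt x, Yt x)) μ)
    (m : Fin d → Bool) (hm : μ {x | Mt x = m} ≠ 0)
    (Qstar : Measure ((Fin d → Option ℝ) × ℝ))
    (hQstar : Qstar = Measure.map (fun p => (maskOp p.1 m, p.2)) Q)
    (Pstar : Measure ((Fin d → Option ℝ) × ℝ))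
    (hPstar : Pstar = Measure.map (fun x => (maskOp (Xt x) m, Yt x)) (μ[|{x | Mt x = m}]))
    (wm : (Fin d → Option ℝ) × ℝ → ℝ) (hwmeas : Measurable wm) (hw0 : ∀ z, 0 ≤ wm z)
    (hwint : Integrable wm Qstar) (c : ℝ) (hc : c = ∫ z, wm z ∂Qstar) (hcpos : 0 < c) :
    1 - α - tvDist (Qstar.withDensity (fun z => ENNReal.ofReal (wm z / c))) Pstar ≤
      ((μ[|{x | Mt x = m}]) {x | ((s (maskOp (Xt x) (Mt x), Yt x) : ℝ) : EReal) ≤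
        wQuantile (1 - α)
          (fun i : Option (Fin n) =>
            i.elim
              ((wm (maskOp (Xt x) (Mt x), Yt x) / c) /
                ((∑ j : Fin n, wm (maskOp (XY j x).1 m, (XY j x).2) / c) +
                  wm (maskOp (Xt x) (Mt x), Yt x) / c))
              (fun j => (wm (maskOp (XY j x).1 m, (XY j x).2) / c) /
                ((∑ j' : Fin n, wm (maskOp (XY j' x).1 m, (XY j' x).2) / c) +
                  wm (maskOp (Xt x) (Mt x), Yt x) / c)))
          (fun i : Option (Fin n) =>
            i.elim (⊤ : EReal)
              (fun j => ((s (maskOp (XY j x).1 m, (XY j x).2) : ℝ) : EReal)))}).toReal :=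
  weighted_conformal_estimated_ratio_coverage_general d n α hα s hs Q μ XY hXYmeas hXYiid hXYlaw Xt
    Mt Yt hXt hMt hYt hindep m hm Qstar hQstar Pstar hPstar wm hwmeas hw0 c hc hcpos
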